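/- Let G = (U,α) and H = (V,β) be connected weighted graphs with label functions ψ_G : U → 𝓐 and ψ_H : V → 𝓐 such that ψ_G and ψ_H are both locally injective (injective on each neighborhood N_G(u) = {u' : α(u,u') > 0}, respectively N_H(v)), and such that each has a magic symbol (there is u* ∈ U with ψ_G(u') = ψ_G(u*) only for u' = u*, and v* ∈ V with ψ_H(v') = ψ_H(v*) only for v' = v*). Let c_Ψ(u,v) = 1 if ψ_G(u) ≠ ψ_H(v) and 0 otherwise. If ρ_{c_Ψ}(G,H) = 0, then: (1) there is a graph isomorphism f : U → V with α(u,u') = β(f(u),f(u')) and ψ_H(f(u)) = ψ_G(u) for all u, u' ∈ U; and (2) the set of optimal weight joinings J*_{c_Ψ}(α,β) contains exactly one element, and this unique optimal weight joining is bijective. -/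

import Mathlib

open Finset

def IsWeightFunction {U : Type*} [Fintype U] (α : U → U → ℝ) : Prop :=
  (∀ u u', 0 ≤ α u u') ∧ (∀ u u', α u u' = α u' u) ∧ (∑ u, ∑ u', α u u' = 1)

noncomputable def marginal {U : Type*} [Fintype U] (α : U → U → ℝ) (u : U) : ℝ :=
  ∑ u', α u u'

def IsWeightJoining {U V : Type*} [Fintype U] [Fintype V]
    (α : U → U → ℝ) (β : V → V → ℝ) (γ : U × V → U × V → ℝ) : Prop :=
  IsWeightFunction γ ∧
  (∀ u, ∑ v, marginal γ (u, v) = marginal α u) ∧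
  (∀ v, ∑ u, marginal γ (u, v) = marginal β v) ∧
  (∀ u u' v, marginal α u * ∑ v', γ (u, v) (u', v') = α u u' * marginal γ (u, v)) ∧
  (∀ v v' u, marginal β v * ∑ u', γ (u, v) (u', v') = β v v' * marginal γ (u, v))

def weightJoinings {U V : Type*} [Fintype U] [Fintype V]
    (α : U → U → ℝ) (β : V → V → ℝ) : Set (U × V → U × V → ℝ) :=
  {γ | IsWeightJoining α β γ}

noncomputable def ogjCost {U V : Type*} [Fintype U] [Fintype V]
    (c : U → V → ℝ) (γ : U × V → U × V → ℝ) : ℝ :=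
  ∑ p : U × V, c p.1 p.2 * marginal γ p

/-- A weighted graph `(U, α)` is connected if any two distinct vertices are joined by
a path of positive-weight edges. -/
def IsConnectedWeight {U : Type*} [Fintype U] (α : U → U → ℝ) : Prop :=
  ∀ u u' : U, u ≠ u' → ∃ n, ∃ w : Fin (n + 1) → U, w 0 = u ∧ w (Fin.last n) = u' ∧
    ∀ i : Fin n, 0 < α (w i.castSucc) (w i.succ)

/-- A weight joining is bijective if each `u ∈ U` has a unique `v ∈ V` with positive
joint marginal and vice versa. -/
def IsBijectiveJoining {U V : Type*} [Fintype U] [Fintype V]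
    (γ : U × V → U × V → ℝ) : Prop :=
  (∀ u : U, ∃! v : V, 0 < marginal γ (u, v)) ∧ (∀ v : V, ∃! u : U, 0 < marginal γ (u, v))

/-- The set `J*(α,β)` of weight joinings minimizing the cost `⟨c, r_γ⟩`. -/
def optimalJoinings {U V : Type*} [Fintype U] [Fintype V]
    (α : U → U → ℝ) (β : V → V → ℝ) (c : U → V → ℝ) : Set (U × V → U × V → ℝ) :=
  {γ ∈ weightJoinings α β | ∀ γ' ∈ weightJoinings α β, ogjCost c γ ≤ ogjCost c γ'}

open Classical in
/-- The 0-1 label-agreement cost function induced by label functions. -/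
noncomputable def labelCost {U V A : Type*} (ψG : U → A) (ψH : V → A) : U → V → ℝ :=
  fun u v => if ψG u = ψH v then 0 else 1

/-! A joining of zero cost charges only pairs `(u, v)` with equal labels, and its transition
couplings let its support follow edges: if `(u, v)` is charged and `α u u' > 0`, then some
`(u', v')` with `β v v' > 0` is charged, and symmetrically. The magic symbol of `H` pins down the
partner of the vertices it is charged with; local injectivity of `ψH` propagates uniqueness of
partners along paths of `G`, so the support is the graph of a bijection `f` (the same argument
run from `H` gives injectivity). The couplings then force `γ` to be the copy of `α` on this graph
and `β (f u) (f u') = α u u'`. Two label-preserving isomorphisms agree at the magic vertex of `G`,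
hence everywhere, so all zero-cost joinings coincide. The infimum is attained because the
joinings form a compact set on which the cost is continuous. -/

section WeightFunction

variable {U : Type*} [Fintype U] {α : U → U → ℝ}

lemma le_marginal (hα : ∀ u u', 0 ≤ α u u') (u u' : U) : α u u' ≤ marginal α u :=
  Finset.single_le_sum (fun i _ => hα u i) (mem_univ u')

lemma marginal_nonneg (hα : ∀ u u', 0 ≤ α u u') (u : U) : 0 ≤ marginal α u :=
  Finset.sum_nonneg fun _ _ => hα u _

lemma IsConnectedWeight.induction_on (hconn : IsConnectedWeight α) {P : U → Prop} (u₀ : U)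
    (h₀ : P u₀) (hstep : ∀ u u', 0 < α u u' → P u → P u') (u : U) : P u := by
  obtain rfl | hne := eq_or_ne u₀ u
  · exact h₀
  obtain ⟨n, w, hw₀, hwn, hedge⟩ := hconn u₀ u hne
  rw [← hwn]
  exact Fin.induction (motive := fun i => P (w i)) (hw₀ ▸ h₀)
    (fun i hi => hstep _ _ (hedge i) hi) (Fin.last n)

lemma IsWeightFunction.marginal_pos (hα : IsWeightFunction α) (hconn : IsConnectedWeight α)
    (u : U) : 0 < marginal α u := by
  obtain ⟨u₀, -, hu₀⟩ : ∃ u₀ ∈ univ, 0 < marginal α u₀ :=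
    (Finset.sum_pos_iff_of_nonneg fun u _ => marginal_nonneg hα.1 u).1
      (hα.2.2.symm ▸ one_pos)
  refine hconn.induction_on (P := fun u => 0 < marginal α u) u₀ hu₀ (fun u u' h _ => ?_) u
  exact (hα.2.1 u u' ▸ h).trans_le (le_marginal hα.1 u' u)

end WeightFunction

section Joining

variable {U V : Type*} [Fintype U] [Fintype V] {α : U → U → ℝ} {β : V → V → ℝ}
  {γ : U × V → U × V → ℝ}

lemma pos_iff_exists_pos_of_mul_sum_eq {ι : Type*} [Fintype ι] {g : ι → ℝ} {m a r : ℝ}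
    (hg : ∀ i, 0 ≤ g i) (hm : 0 < m) (hr : 0 < r) (h : m * ∑ i, g i = a * r) :
    0 < a ↔ ∃ i, 0 < g i := by
  rw [← mul_pos_iff_of_pos_right hr, ← h, mul_pos_iff_of_pos_left hm,
    Finset.sum_pos_iff_of_nonneg fun i _ => hg i]
  simp only [mem_univ, true_and]

namespace IsWeightJoining

variable (hγ : IsWeightJoining α β γ)
include hγ

lemma marginal_le_left (u : U) (v : V) : marginal γ (u, v) ≤ marginal α u :=
  hγ.2.1 u ▸ Finset.single_le_sum (f := fun v => marginal γ (u, v))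
    (fun _ _ => marginal_nonneg hγ.1.1 _) (mem_univ v)

lemma marginal_le_right (u : U) (v : V) : marginal γ (u, v) ≤ marginal β v :=
  hγ.2.2.1 v ▸ Finset.single_le_sum (f := fun u => marginal γ (u, v))
    (fun _ _ => marginal_nonneg hγ.1.1 _) (mem_univ u)

lemma marginal_pos_of_pos {x y : U × V} (h : 0 < γ x y) : 0 < marginal γ y :=
  (hγ.1.2.1 x y ▸ h).trans_le (le_marginal hγ.1.1 y x)

lemma exists_marginal_pos_left {u : U} (h : 0 < marginal α u) :
    ∃ v, 0 < marginal γ (u, v) := by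
  rw [← hγ.2.1 u] at h
  simpa using (Finset.sum_pos_iff_of_nonneg fun v _ => marginal_nonneg hγ.1.1 (u, v)).1 h

lemma exists_marginal_pos_right {v : V} (h : 0 < marginal β v) :
    ∃ u, 0 < marginal γ (u, v) := by
  rw [← hγ.2.2.1 v] at h
  simpa using (Finset.sum_pos_iff_of_nonneg fun u _ => marginal_nonneg hγ.1.1 (u, v)).1 h

lemma left_weight_pos_iff {u u' : U} {v : V} (hr : 0 < marginal γ (u, v)) :
    0 < α u u' ↔ ∃ v', 0 < γ (u, v) (u', v') :=
  pos_iff_exists_pos_of_mul_sum_eq (fun _ => hγ.1.1 _ _)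
    (hr.trans_le (hγ.marginal_le_left u v)) hr (hγ.2.2.2.1 u u' v)

lemma right_weight_pos_iff {u : U} {v v' : V} (hr : 0 < marginal γ (u, v)) :
    0 < β v v' ↔ ∃ u', 0 < γ (u, v) (u', v') :=
  pos_iff_exists_pos_of_mul_sum_eq (fun _ => hγ.1.1 _ _)
    (hr.trans_le (hγ.marginal_le_right u v)) hr (hγ.2.2.2.2 v v' u)

lemma exists_step_left {u u' : U} {v : V} (hr : 0 < marginal γ (u, v)) (h : 0 < α u u') :
    ∃ v', 0 < β v v' ∧ 0 < marginal γ (u', v') := by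
  obtain ⟨v', hv'⟩ := (hγ.left_weight_pos_iff hr).1 h
  exact ⟨v', (hγ.right_weight_pos_iff hr).2 ⟨u', hv'⟩, hγ.marginal_pos_of_pos hv'⟩

lemma exists_step_right {u : U} {v v' : V} (hr : 0 < marginal γ (u, v)) (h : 0 < β v v') :
    ∃ u', 0 < α u u' ∧ 0 < marginal γ (u', v') := by
  obtain ⟨u', hu'⟩ := (hγ.right_weight_pos_iff hr).1 h
  exact ⟨u', (hγ.left_weight_pos_iff hr).2 ⟨v', hu'⟩, hγ.marginal_pos_of_pos hu'⟩

end IsWeightJoining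

end Joining

open Classical in
noncomputable def graphJoining {U V : Type*} (α : U → U → ℝ) (f : U → V) :
    U × V → U × V → ℝ :=
  fun x y => if f x.1 = x.2 ∧ f y.1 = y.2 then α x.1 y.1 else 0

namespace IsWeightJoining

variable {U V : Type*} [Fintype U] [Fintype V] {α : U → U → ℝ} {β : V → V → ℝ}
  {γ : U × V → U × V → ℝ} {f : U → V}
  (hγ : IsWeightJoining α β γ) (hsupp : ∀ {u v}, 0 < marginal γ (u, v) ↔ f u = v)
include hγ hsupp

lemma marginal_eq_zero_of_ne {u : U} {v : V} (h : f u ≠ v) : marginal γ (u, v) = 0 :=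
  (marginal_nonneg hγ.1.1 _).antisymm' (not_lt.1 (hsupp.not.2 h))

lemma apply_eq_zero_of_not_mem_graph {x y : U × V} (h : ¬(f x.1 = x.2 ∧ f y.1 = y.2)) :
    γ x y = 0 := by
  rcases not_and_or.1 h with h | h
  · exact (hγ.1.1 x y).antisymm' <|
      (le_marginal hγ.1.1 x y).trans (hγ.marginal_eq_zero_of_ne hsupp h).le
  · exact (hγ.1.1 x y).antisymm' <| hγ.1.2.1 x y ▸
      (le_marginal hγ.1.1 y x).trans (hγ.marginal_eq_zero_of_ne hsupp h).le

lemma marginal_graph_eq_left (u : U) : marginal γ (u, f u) = marginal α u := by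
  rw [← hγ.2.1 u, Finset.sum_eq_single (f u)
    (fun v _ hv => hγ.marginal_eq_zero_of_ne hsupp (Ne.symm hv)) (by simp)]

lemma marginal_graph_eq_right (hf : Function.Injective f) (u : U) :
    marginal γ (u, f u) = marginal β (f u) := by
  rw [← hγ.2.2.1 (f u), Finset.sum_eq_single u
    (fun u' _ hu' => hγ.marginal_eq_zero_of_ne hsupp (hf.ne hu')) (by simp)]

lemma apply_graph (u u' : U) : γ (u, f u) (u', f u') = α u u' := by
  have hcoupling := hγ.2.2.2.1 u u' (f u)
  rw [Finset.sum_eq_single (f u') (fun v' _ hv' => hγ.apply_eq_zero_of_not_mem_graph hsupp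
    (fun h => hv' h.2.symm)) (by simp), ← hγ.marginal_graph_eq_left hsupp, mul_comm] at hcoupling
  exact mul_right_cancel₀ (hsupp.2 rfl).ne' hcoupling

lemma weight_eq_of_injective (hf : Function.Injective f) (u u' : U) :
    α u u' = β (f u) (f u') := by
  have hcoupling := hγ.2.2.2.2 (f u) (f u') u
  rw [Finset.sum_eq_single u' (fun u'' _ hu'' => hγ.apply_eq_zero_of_not_mem_graph hsupp
    (fun h => hu'' (hf h.2))) (by simp), hγ.apply_graph hsupp,
    ← hγ.marginal_graph_eq_right hsupp hf, mul_comm] at hcoupling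
  exact mul_right_cancel₀ (hsupp.2 rfl).ne' hcoupling

lemma eq_graphJoining : γ = graphJoining α f := by
  funext ⟨u, v⟩ ⟨u', v'⟩
  simp only [graphJoining]
  split_ifs with h
  · obtain ⟨rfl, rfl⟩ := h
    exact hγ.apply_graph hsupp u u'
  · exact hγ.apply_eq_zero_of_not_mem_graph hsupp h

end IsWeightJoining

lemma isBijectiveJoining_of_support {U V : Type*} [Fintype U] [Fintype V]
    {γ : U × V → U × V → ℝ} {f : U → V} (hf : Function.Bijective f)
    (hsupp : ∀ {u v}, 0 < marginal γ (u, v) ↔ f u = v) : IsBijectiveJoining γ := by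
  refine ⟨fun u => ⟨f u, hsupp.2 rfl, fun v h => (hsupp.1 h).symm⟩, fun v => ?_⟩
  simpa only [hsupp] using hf.existsUnique v

lemma labelCost_nonneg {U V A : Type*} (ψG : U → A) (ψH : V → A) (u : U) (v : V) :
    0 ≤ labelCost ψG ψH u v := by
  unfold labelCost; split_ifs <;> norm_num

lemma labelCost_eq_zero_iff {U V A : Type*} {ψG : U → A} {ψH : V → A} {u : U} {v : V} :
    labelCost ψG ψH u v = 0 ↔ ψG u = ψH v := by
  unfold labelCost; split_ifs with h <;> simp [h]

lemma eq_zero_of_ogjCost_eq_zero {U V : Type*} [Fintype U] [Fintype V] {c : U → V → ℝ}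
    {γ : U × V → U × V → ℝ} (hc : ∀ u v, 0 ≤ c u v) (hγ : ∀ x y, 0 ≤ γ x y)
    (h₀ : ogjCost c γ = 0) {u : U} {v : V} (hr : 0 < marginal γ (u, v)) : c u v = 0 :=
  ((Finset.sum_eq_zero_iff_of_nonneg fun p _ => mul_nonneg (hc _ _) (marginal_nonneg hγ p)).1
    h₀ (u, v) (mem_univ _) |> mul_eq_zero.1).resolve_right hr.ne'

def IsLabelIso {U V A : Type*} (α : U → U → ℝ) (β : V → V → ℝ) (ψG : U → A) (ψH : V → A)
    (f : U → V) : Prop :=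
  Function.Bijective f ∧ (∀ u u', α u u' = β (f u) (f u')) ∧ ∀ u, ψH (f u) = ψG u

section Labels

variable {U V A : Type*} [Fintype U] {α : U → U → ℝ} {β : V → V → ℝ}
  {ψG : U → A} {ψH : V → A}

lemma IsLabelIso.unique {f g : U → V} (hf : IsLabelIso α β ψG ψH f)
    (hg : IsLabelIso α β ψG ψH g) (hconn : IsConnectedWeight α)
    (hlocH : ∀ v v₁ v₂ : V, 0 < β v v₁ → 0 < β v v₂ → ψH v₁ = ψH v₂ → v₁ = v₂)
    (hmagicG : ∃ u₀ : U, ∀ u : U, ψG u = ψG u₀ → u = u₀) : f = g := by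
  obtain ⟨u₀, hu₀⟩ := hmagicG
  obtain ⟨w, hw⟩ := hg.1.2 (f u₀)
  obtain rfl : w = u₀ := hu₀ w (by rw [← hg.2.2 w, hw, hf.2.2])
  funext u
  refine hconn.induction_on (P := fun u => f u = g u) w hw.symm (fun u u' h hu => ?_) u
  exact hlocH (f u) (f u') (g u') (hf.2.1 u u' ▸ h) (hu ▸ hg.2.1 u u' ▸ h)
    (by rw [hf.2.2, hg.2.2])

lemma existsUnique_of_forall_step (hα : ∀ u u', α u u' = α u' u)
    (hβ : ∀ v v', β v v' = β v' v) (hconn : IsConnectedWeight α)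
    (hlocH : ∀ v v₁ v₂ : V, 0 < β v v₁ → 0 < β v v₂ → ψH v₁ = ψH v₂ → v₁ = v₂)
    {R : U → V → Prop} (hlabel : ∀ {u v}, R u v → ψG u = ψH v)
    (hstep : ∀ {u v u'}, R u v → 0 < α u u' → ∃ v', 0 < β v v' ∧ R u' v')
    {u₀ : U} {v₀ : V} (hv₀ : ∀ v, ψH v = ψH v₀ → v = v₀) (hR₀ : R u₀ v₀) :
    ∀ u, ∃! v, R u v := by
  refine hconn.induction_on u₀
    ⟨v₀, hR₀, fun v hv => hv₀ v ((hlabel hv).symm.trans (hlabel hR₀))⟩ ?_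
  rintro u u' huu' ⟨v, hv, hv_unique⟩
  obtain ⟨v', hvv', hv'⟩ := hstep hv huu'
  refine ⟨v', hv', fun w hw => ?_⟩
  -- stepping back from `(u', w)` lands on the unique partner `v` of `u`,
  -- so `w` and `v'` are neighbours of `v` with the same label
  obtain ⟨t, hwt, ht⟩ := hstep hw (hα u u' ▸ huu')
  obtain rfl := hv_unique t ht
  exact hlocH t w v' (hβ w t ▸ hwt) hvv' ((hlabel hw).symm.trans (hlabel hv'))

end Labels

theorem exists_isLabelIso_of_ogjCost_eq_zero {U V A : Type*} [Fintype U] [Fintype V]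
    {α : U → U → ℝ} {β : V → V → ℝ} (hα : IsWeightFunction α) (hβ : IsWeightFunction β)
    (hGconn : IsConnectedWeight α) (hHconn : IsConnectedWeight β) {ψG : U → A} {ψH : V → A}
    (hlocG : ∀ u u₁ u₂ : U, 0 < α u u₁ → 0 < α u u₂ → ψG u₁ = ψG u₂ → u₁ = u₂)
    (hlocH : ∀ v v₁ v₂ : V, 0 < β v v₁ → 0 < β v v₂ → ψH v₁ = ψH v₂ → v₁ = v₂)
    (hmagicG : ∃ u₀ : U, ∀ u : U, ψG u = ψG u₀ → u = u₀)
    (hmagicH : ∃ v₀ : V, ∀ v : V, ψH v = ψH v₀ → v = v₀)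
    {γ : U × V → U × V → ℝ} (hγ : IsWeightJoining α β γ)
    (h₀ : ogjCost (labelCost ψG ψH) γ = 0) :
    ∃ f, IsLabelIso α β ψG ψH f ∧ ∀ {u v}, 0 < marginal γ (u, v) ↔ f u = v := by
  have hlabel : ∀ {u v}, 0 < marginal γ (u, v) → ψG u = ψH v := fun hr =>
    labelCost_eq_zero_iff.1 (eq_zero_of_ogjCost_eq_zero (labelCost_nonneg ψG ψH) hγ.1.1 h₀ hr)
  obtain ⟨u₀, hu₀⟩ := hmagicG
  obtain ⟨v₀, hv₀⟩ := hmagicH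
  obtain ⟨u₁, hu₁⟩ := hγ.exists_marginal_pos_right (hβ.marginal_pos hHconn v₀)
  obtain ⟨v₁, hv₁⟩ := hγ.exists_marginal_pos_left (hα.marginal_pos hGconn u₀)
  obtain ⟨f, hf⟩ := forall_existsUnique_iff.1 <| existsUnique_of_forall_step
    (R := fun u v => 0 < marginal γ (u, v)) hα.2.1 hβ.2.1 hGconn hlocH hlabel
    hγ.exists_step_left hv₀ hu₁
  have hbij : Function.Bijective f := by
    rw [Function.bijective_iff_existsUnique]
    simpa only [hf] using existsUnique_of_forall_step (R := fun v u => 0 < marginal γ (u, v))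
      hβ.2.1 hα.2.1 hHconn hlocG (fun hr => (hlabel hr).symm) hγ.exists_step_right hu₀ hv₁
  exact ⟨f, ⟨hbij, hγ.weight_eq_of_injective hf hbij.1, fun u => (hlabel (hf.2 rfl)).symm⟩, hf⟩

section Existence

variable {U V : Type*} [Fintype U] [Fintype V] {α : U → U → ℝ} {β : V → V → ℝ}

def productJoining (α : U → U → ℝ) (β : V → V → ℝ) : U × V → U × V → ℝ :=
  fun x y => α x.1 y.1 * β x.2 y.2

lemma marginal_productJoining (x : U × V) :
    marginal (productJoining α β) x = marginal α x.1 * marginal β x.2 := by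
  rw [marginal, Fintype.sum_prod_type, marginal, marginal, Finset.sum_mul_sum]
  rfl

lemma isWeightJoining_productJoining (hα : IsWeightFunction α) (hβ : IsWeightFunction β) :
    IsWeightJoining α β (productJoining α β) := by
  have hp : ∑ u, marginal α u = 1 := hα.2.2
  have hq : ∑ v, marginal β v = 1 := hβ.2.2
  refine ⟨⟨fun x y => mul_nonneg (hα.1 _ _) (hβ.1 _ _),
    fun x y => by simp only [productJoining, hα.2.1 x.1, hβ.2.1 x.2], ?_⟩, fun u => ?_,
    fun v => ?_, fun u u' v => ?_, fun v v' u => ?_⟩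
  · change ∑ x, marginal (productJoining α β) x = 1
    simp only [marginal_productJoining, Fintype.sum_prod_type, ← Finset.sum_mul_sum, hp, hq,
      mul_one]
  · simp only [marginal_productJoining, ← Finset.mul_sum, hq, mul_one]
  · simp only [marginal_productJoining, ← Finset.sum_mul, hp, one_mul]
  · rw [marginal_productJoining]
    simp only [productJoining, ← Finset.mul_sum]
    change _ * (_ * marginal β v) = _
    ring
  · rw [marginal_productJoining]
    simp only [productJoining, ← Finset.sum_mul]
    change _ * (marginal α u * _) = _
    ring

@[fun_prop]
lemma continuous_marginal {X : Type*} [Fintype X] (x : X) :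
    Continuous fun γ : X → X → ℝ => marginal γ x := by
  unfold marginal; fun_prop

lemma continuous_ogjCost (c : U → V → ℝ) :
    Continuous fun γ : U × V → U × V → ℝ => ogjCost c γ := by
  unfold ogjCost; fun_prop

lemma isClosed_weightJoinings : IsClosed (weightJoinings α β) := by
  simp only [weightJoinings, IsWeightJoining, IsWeightFunction, Set.ofPred_and,
    Set.ofPred_forall]
  repeat' first
    | apply IsClosed.inter
    | (apply isClosed_iInter; intro)
    | (apply isClosed_le <;> fun_prop)
    | (apply isClosed_eq <;> fun_prop)

lemma isCompact_weightJoinings : IsCompact (weightJoinings α β) := by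
  refine (isCompact_univ_pi fun _ => isCompact_univ_pi fun _ => isCompact_Icc (a := (0 : ℝ))
    (b := 1)).of_isClosed_subset isClosed_weightJoinings fun γ hγ x _ y _ => ?_
  have hγ : IsWeightJoining α β γ := hγ
  refine ⟨hγ.1.1 x y, (le_marginal hγ.1.1 x y).trans ?_⟩
  exact hγ.1.2.2 ▸ Finset.single_le_sum (fun x _ => marginal_nonneg hγ.1.1 x) (mem_univ x)

lemma optimalJoinings_nonempty (hα : IsWeightFunction α) (hβ : IsWeightFunction β)
    (c : U → V → ℝ) : (optimalJoinings α β c).Nonempty := by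
  obtain ⟨γ, hγ, hmin⟩ := isCompact_weightJoinings.exists_isMinOn
    ⟨_, isWeightJoining_productJoining hα hβ⟩ (continuous_ogjCost c).continuousOn
  exact ⟨γ, hγ, fun γ' hγ' => hmin hγ'⟩

lemma sInf_ogjCost_eq_of_mem_optimalJoinings {c : U → V → ℝ} {γ : U × V → U × V → ℝ}
    (hγ : γ ∈ optimalJoinings α β c) :
    sInf {x : ℝ | ∃ γ ∈ weightJoinings α β, x = ogjCost c γ} = ogjCost c γ :=
  IsLeast.csInf_eq ⟨⟨γ, hγ.1, rfl⟩, by rintro _ ⟨γ', hγ', rfl⟩; exact hγ.2 γ' hγ'⟩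

end Existence

/-- Let `G` and `H` be connected weighted graphs whose label
functions are locally injective and have magic symbols.  If `ρ_{c_Ψ}(G,H) = 0`, then
(1) there is a graph isomorphism from `G` to `H` preserving weights and labels, and
(2) the set of optimal weight joinings is a singleton whose unique element is
bijective. -/
theorem detection_and_identification_with_magic_symbols
    {U V A : Type*} [Fintype U] [Fintype V]
    (α : U → U → ℝ) (β : V → V → ℝ)
    (hα : IsWeightFunction α) (hβ : IsWeightFunction β)
    (hGconn : IsConnectedWeight α) (hHconn : IsConnectedWeight β)
    (ψG : U → A) (ψH : V → A)
    (hlocG : ∀ u u₁ u₂ : U, 0 < α u u₁ → 0 < α u u₂ → ψG u₁ = ψG u₂ → u₁ = u₂)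
    (hlocH : ∀ v v₁ v₂ : V, 0 < β v v₁ → 0 < β v v₂ → ψH v₁ = ψH v₂ → v₁ = v₂)
    (hmagicG : ∃ u₀ : U, ∀ u : U, ψG u = ψG u₀ → u = u₀)
    (hmagicH : ∃ v₀ : V, ∀ v : V, ψH v = ψH v₀ → v = v₀)
    (hρ : sInf {x : ℝ | ∃ γ ∈ weightJoinings α β, x = ogjCost (labelCost ψG ψH) γ} = 0) :
    (∃ f : U → V, Function.Bijective f ∧
      (∀ u u' : U, α u u' = β (f u) (f u')) ∧
      (∀ u : U, ψH (f u) = ψG u)) ∧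
    (∃ γ : U × V → U × V → ℝ,
      optimalJoinings α β (labelCost ψG ψH) = {γ} ∧ IsBijectiveJoining γ) := by
  obtain ⟨γ₀, hγ₀⟩ := optimalJoinings_nonempty hα hβ (labelCost ψG ψH)
  have hzero : ∀ γ ∈ optimalJoinings α β (labelCost ψG ψH), ogjCost (labelCost ψG ψH) γ = 0 :=
    fun γ hγ => (sInf_ogjCost_eq_of_mem_optimalJoinings hγ).symm.trans hρ
  obtain ⟨f, hf, hsupp⟩ := exists_isLabelIso_of_ogjCost_eq_zero hα hβ hGconn hHconn hlocG hlocH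
    hmagicG hmagicH hγ₀.1 (hzero γ₀ hγ₀)
  refine ⟨⟨f, hf⟩, γ₀, Set.eq_singleton_iff_unique_mem.2 ⟨hγ₀, fun γ hγ => ?_⟩,
    isBijectiveJoining_of_support hf.1 hsupp⟩
  obtain ⟨g, hg, hsuppg⟩ := exists_isLabelIso_of_ogjCost_eq_zero hα hβ hGconn hHconn hlocG hlocH
    hmagicG hmagicH hγ.1 (hzero γ hγ)
  rw [hγ.1.eq_graphJoining hsuppg, hγ₀.1.eq_graphJoining hsupp, hg.unique hf hGconn hlocH hmagicG]
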